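/- Let P₀ and P₁ be probability measures on ℝ with finite second moments and quantile functions F₀⁻¹, F₁⁻¹. For every coupling J of P₀ and P₁, ∫ (y₁ − y₀)² dJ(y₀, y₁) ≥ ∫₀¹ (F₁⁻¹(u) − F₀⁻¹(u))² du, and equality holds when J is the comonotone coupling, the pushforward of Lebesgue measure on (0,1) under u ↦ (F₀⁻¹(u), F₁⁻¹(u)). In other words, the comonotone (quantile) coupling minimizes the quadratic treatment effect E[(Y₁ − Y₀)²] over all couplings, and the minimum equals the squared 2-Wasserstein distance ∫₀¹ (F₁⁻¹ − F₀⁻¹)² du. -/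

import Mathlib

/-!
Expanding the square, `∫ (y₁ - y₀)² dJ = ∫ y₀² dP₀ + ∫ y₁² dP₁ - 2 ∫ y₀ y₁ dJ`, so it suffices
to show that the comonotone coupling `M` maximises the cross moment among couplings of `P₀` and
`P₁`. Since `x y = ∫∫ (1{x ≤ s} - 1{0 ≤ s}) (1{y ≤ t} - 1{0 ≤ t}) ds dt`, Fubini (justified by
the second moments) turns the cross moment of a coupling `J` into `∫∫ J(Iic s ×ˢ Iic t) ds dt`
plus terms that depend only on the marginals. The Fréchet bound
`J(Iic s ×ˢ Iic t) ≤ min (F₀ s) (F₁ t)` is attained by `M`: by the Galois connection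
`F⁻¹ u ≤ y ↔ u ≤ F y`, the set `{u ∈ (0,1) | F₀⁻¹ u ≤ s ∧ F₁⁻¹ u ≤ t}` is `(0, min (F₀ s) (F₁ t)]`.
-/

open MeasureTheory Set Filter

/-- The cumulative distribution function of a measure on ℝ. -/
noncomputable def cdf (P : MeasureTheory.Measure ℝ) (y : ℝ) : ℝ := (P (Set.Iic y)).toReal

/-- The quantile function (generalized inverse cdf) of a measure on ℝ. -/
noncomputable def quantile (P : MeasureTheory.Measure ℝ) (u : ℝ) : ℝ :=
  sInf {y : ℝ | u ≤ cdf P y}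

section FiniteMeasure

variable (P : Measure ℝ) [IsFiniteMeasure P]

lemma monotone_cdf : Monotone (cdf P) := fun _ _ h =>
  ENNReal.toReal_mono (measure_ne_top P _) (measure_mono (Iic_subset_Iic.2 h))

lemma ofReal_cdf (y : ℝ) : ENNReal.ofReal (cdf P y) = P (Iic y) :=
  ENNReal.ofReal_toReal (measure_ne_top P _)

end FiniteMeasure

section Quantile

variable (P : Measure ℝ) [IsProbabilityMeasure P]

lemma cdf_eq_probabilityTheory_cdf : cdf P = ProbabilityTheory.cdf P :=
  funext fun y => (ProbabilityTheory.cdf_eq_real P y).symm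

lemma cdf_le_one (y : ℝ) : cdf P y ≤ 1 :=
  cdf_eq_probabilityTheory_cdf P ▸ ProbabilityTheory.cdf_le_one P y

variable {P} {u y : ℝ}

lemma nonempty_setOf_le_cdf (hu : u < 1) : {y | u ≤ cdf P y}.Nonempty := by
  rw [cdf_eq_probabilityTheory_cdf]
  exact ((ProbabilityTheory.tendsto_cdf_atTop P).eventually (eventually_ge_nhds hu)).exists

lemma bddBelow_setOf_le_cdf (hu : 0 < u) : BddBelow {y | u ≤ cdf P y} := by
  rw [cdf_eq_probabilityTheory_cdf]
  obtain ⟨b, hb⟩ := (ProbabilityTheory.tendsto_cdf_atBot P).eventually (eventually_lt_nhds hu)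
    |>.exists_forall_of_atBot
  exact ⟨b, fun y hy => not_lt.1 fun hyb => (hb y hyb.le).not_ge hy⟩

lemma le_cdf_quantile (hu0 : 0 < u) (hu1 : u < 1) : u ≤ cdf P (quantile P u) := by
  have hS := bddBelow_setOf_le_cdf (P := P) hu0
  have hne := nonempty_setOf_le_cdf (P := P) hu1
  rw [quantile, cdf_eq_probabilityTheory_cdf] at *
  refine ge_of_tendsto ((ProbabilityTheory.cdf P).right_continuous _ |>.mono Ioi_subset_Ici_self)
    (eventually_nhdsWithin_of_forall fun r hr => ?_)
  obtain ⟨z, hz, hzr⟩ := (csInf_lt_iff hS hne).1 hr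
  exact hz.trans (ProbabilityTheory.monotone_cdf P hzr.le)

lemma quantile_le_iff (hu0 : 0 < u) (hu1 : u < 1) : quantile P u ≤ y ↔ u ≤ cdf P y :=
  ⟨fun h => (le_cdf_quantile hu0 hu1).trans (monotone_cdf P h),
    fun h => csInf_le (bddBelow_setOf_le_cdf hu0) h⟩

lemma monotoneOn_quantile : MonotoneOn (quantile P) (Ioo 0 1) := fun _ ha _ hb hab =>
  (quantile_le_iff ha.1 ha.2).2 (hab.trans (le_cdf_quantile hb.1 hb.2))

lemma aemeasurable_quantile : AEMeasurable (quantile P) (volume.restrict (Ioo 0 1)) :=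
  aemeasurable_restrict_of_monotoneOn measurableSet_Ioo monotoneOn_quantile

end Quantile

instance : IsProbabilityMeasure (volume.restrict (Ioo (0 : ℝ) 1)) := ⟨by simp⟩

lemma volume_Iic_inter_Ioo {c : ℝ} (hc : c ≤ 1) :
    volume (Iic c ∩ Ioo 0 1) = ENNReal.ofReal c := by
  refine le_antisymm ?_ ?_
  · calc volume (Iic c ∩ Ioo 0 1) ≤ volume (Ioc 0 c) := measure_mono fun x hx => ⟨hx.2.1, hx.1⟩
      _ = ENNReal.ofReal c := by simp
  · calc ENNReal.ofReal c = volume (Ioo 0 c) := by simp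
      _ ≤ volume (Iic c ∩ Ioo 0 1) := measure_mono fun x hx => ⟨hx.2.le, hx.1, hx.2.trans_le hc⟩

lemma map_quantile (P : Measure ℝ) [IsProbabilityMeasure P] :
    (volume.restrict (Ioo 0 1)).map (quantile P) = P := by
  refine (Measure.ext_of_Iic P _ fun y => ?_).symm
  have hpre : quantile P ⁻¹' Iic y ∩ Ioo 0 1 = Iic (cdf P y) ∩ Ioo 0 1 := by
    ext u
    simp only [mem_inter_iff, mem_preimage, mem_Iic, and_congr_left_iff]
    exact fun hu => quantile_le_iff hu.1 hu.2
  rw [Measure.map_apply_of_aemeasurable aemeasurable_quantile measurableSet_Iic,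
    Measure.restrict_apply' measurableSet_Ioo, hpre, volume_Iic_inter_Ioo (cdf_le_one P y),
    ofReal_cdf]

noncomputable def comonotoneCoupling (P0 P1 : Measure ℝ) : Measure (ℝ × ℝ) :=
  (volume.restrict (Ioo 0 1)).map fun u => (quantile P0 u, quantile P1 u)

section Comonotone

variable (P0 P1 : Measure ℝ) [IsProbabilityMeasure P0] [IsProbabilityMeasure P1]

lemma aemeasurable_quantile_prod :
    AEMeasurable (fun u => (quantile P0 u, quantile P1 u)) (volume.restrict (Ioo 0 1)) :=
  aemeasurable_quantile.prodMk aemeasurable_quantile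

instance : IsProbabilityMeasure (comonotoneCoupling P0 P1) :=
  Measure.isProbabilityMeasure_map (aemeasurable_quantile_prod P0 P1)

lemma map_fst_comonotoneCoupling : (comonotoneCoupling P0 P1).map Prod.fst = P0 := by
  rw [comonotoneCoupling, AEMeasurable.map_map_of_aemeasurable measurable_fst.aemeasurable
    (aemeasurable_quantile_prod P0 P1)]
  exact map_quantile P0

lemma map_snd_comonotoneCoupling : (comonotoneCoupling P0 P1).map Prod.snd = P1 := by
  rw [comonotoneCoupling, AEMeasurable.map_map_of_aemeasurable measurable_snd.aemeasurable
    (aemeasurable_quantile_prod P0 P1)]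
  exact map_quantile P1

lemma comonotoneCoupling_Iic_prod_Iic (s t : ℝ) :
    comonotoneCoupling P0 P1 (Iic s ×ˢ Iic t) = min (P0 (Iic s)) (P1 (Iic t)) := by
  have hpre : (fun u => (quantile P0 u, quantile P1 u)) ⁻¹' (Iic s ×ˢ Iic t) ∩ Ioo 0 1 =
      Iic (min (cdf P0 s) (cdf P1 t)) ∩ Ioo 0 1 := by
    ext u
    simp only [mem_inter_iff, mem_preimage, mem_prod, mem_Iic, le_min_iff, and_congr_left_iff]
    exact fun hu => and_congr (quantile_le_iff hu.1 hu.2) (quantile_le_iff hu.1 hu.2)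
  rw [comonotoneCoupling, Measure.map_apply_of_aemeasurable (aemeasurable_quantile_prod P0 P1)
      (measurableSet_Iic.prod measurableSet_Iic), Measure.restrict_apply' measurableSet_Ioo, hpre,
    volume_Iic_inter_Ioo (min_le_of_left_le (cdf_le_one P0 s)), ENNReal.ofReal_min, ofReal_cdf,
    ofReal_cdf]

lemma integral_comonotoneCoupling (f : ℝ × ℝ → ℝ) (hf : Continuous f) :
    ∫ p, f p ∂comonotoneCoupling P0 P1 =
      ∫ u in Ioo 0 1, f (quantile P0 u, quantile P1 u) :=
  integral_map (aemeasurable_quantile_prod P0 P1) hf.aestronglyMeasurable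

end Comonotone

lemma measure_prod_le_min_map {α β : Type*} [MeasurableSpace α] [MeasurableSpace β]
    (K : Measure (α × β)) (A : Set α) (B : Set β) :
    K (A ×ˢ B) ≤ min (K.map Prod.fst A) (K.map Prod.snd B) :=
  le_min ((measure_mono (prod_subset_preimage_fst A B)).trans
      (Measure.le_map_apply measurable_fst.aemeasurable A))
    ((measure_mono (prod_subset_preimage_snd A B)).trans
      (Measure.le_map_apply measurable_snd.aemeasurable B))

lemma integral_indicator_sub_mul_indicator_sub {α β : Type*} [MeasurableSpace α]
    [MeasurableSpace β] (K : Measure (α × β)) [IsFiniteMeasure K] {A : Set α} {B : Set β}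
    (hA : MeasurableSet A) (hB : MeasurableSet B) (c d : ℝ) :
    ∫ p, (A.indicator 1 p.1 - c) * (B.indicator 1 p.2 - d) ∂K =
      K.real (A ×ˢ B) - d * (K.map Prod.fst).real A - c * (K.map Prod.snd).real B
        + c * d * K.real univ := by
  have hAB : MeasurableSet (A ×ˢ B) := hA.prod hB
  have hA' : MeasurableSet (Prod.fst ⁻¹' A : Set (α × β)) := measurable_fst hA
  have hB' : MeasurableSet (Prod.snd ⁻¹' B : Set (α × β)) := measurable_snd hB
  have hexpand : ∀ p : α × β, (A.indicator 1 p.1 - c) * (B.indicator 1 p.2 - d) =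
      (A ×ˢ B).indicator 1 p - d * (Prod.fst ⁻¹' A).indicator 1 p
        - c * (Prod.snd ⁻¹' B).indicator 1 p + c * d := by
    intro p
    by_cases h1 : p.1 ∈ A <;> by_cases h2 : p.2 ∈ B <;> simp [h1, h2] <;> ring
  have hind : ∀ {S : Set (α × β)}, MeasurableSet S → Integrable (S.indicator (1 : α × β → ℝ)) K :=
    fun hS => (integrable_const 1).indicator hS
  simp only [hexpand]
  rw [integral_add, integral_sub, integral_sub, integral_const_mul, integral_const_mul,
    integral_indicator_one hAB, integral_indicator_one hA', integral_indicator_one hB',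
    integral_const, map_measureReal_apply measurable_fst hA,
    map_measureReal_apply measurable_snd hB, smul_eq_mul]
  · ring
  all_goals fun_prop (disch := assumption)

section CrossMoment

noncomputable def stepDiff (x s : ℝ) : ℝ := (Iic s).indicator 1 x - (Iic s).indicator 1 0

lemma stepDiff_eq (x s : ℝ) :
    stepDiff x s = (Ico x 0).indicator 1 s - (Ico 0 x).indicator 1 s := by
  simp only [stepDiff, indicator_apply, mem_Iic, mem_Ico, Pi.one_apply]
  split_ifs <;> grind

lemma abs_stepDiff (x s : ℝ) :
    |stepDiff x s| = (Ico x 0).indicator 1 s + (Ico 0 x).indicator 1 s := by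
  simp only [stepDiff, indicator_apply, mem_Iic, mem_Ico, Pi.one_apply]
  split_ifs <;> grind

lemma integrable_indicator_Ico_one (a b : ℝ) : Integrable ((Ico a b).indicator (1 : ℝ → ℝ)) :=
  (integrable_indicator_iff measurableSet_Ico).2 (integrableOn_const measure_Ico_lt_top.ne)

lemma integrable_stepDiff (x : ℝ) : Integrable (stepDiff x) := by
  simp only [funext (stepDiff_eq x)]
  exact (integrable_indicator_Ico_one _ _).sub (integrable_indicator_Ico_one _ _)

lemma integral_stepDiff (x : ℝ) : ∫ s, stepDiff x s = -x := by
  simp only [stepDiff_eq]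
  rw [integral_sub (integrable_indicator_Ico_one _ _) (integrable_indicator_Ico_one _ _),
    integral_indicator_one measurableSet_Ico, integral_indicator_one measurableSet_Ico,
    Real.volume_real_Ico, Real.volume_real_Ico]
  rcases le_total x 0 with h | h <;> simp [h]

lemma integral_abs_stepDiff (x : ℝ) : ∫ s, |stepDiff x s| = |x| := by
  simp only [abs_stepDiff]
  rw [integral_add (integrable_indicator_Ico_one _ _) (integrable_indicator_Ico_one _ _),
    integral_indicator_one measurableSet_Ico, integral_indicator_one measurableSet_Ico,
    Real.volume_real_Ico, Real.volume_real_Ico]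
  rcases le_total x 0 with h | h <;> simp [h, abs_of_nonneg, abs_of_nonpos]

lemma measurable_stepDiff : Measurable (Function.uncurry stepDiff) := by
  unfold stepDiff Function.uncurry
  simp only [indicator_apply, mem_Iic, Pi.one_apply]
  exact (Measurable.ite (measurableSet_le measurable_fst measurable_snd) measurable_const
    measurable_const).sub
    (Measurable.ite (measurableSet_le measurable_const measurable_snd) measurable_const
      measurable_const)

lemma integral_stepDiff_mul_stepDiff_le {J M : Measure (ℝ × ℝ)} [IsFiniteMeasure J]
    [IsFiniteMeasure M] (h0 : J.map Prod.fst = M.map Prod.fst)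
    (h1 : J.map Prod.snd = M.map Prod.snd) {s t : ℝ}
    (hle : J (Iic s ×ˢ Iic t) ≤ M (Iic s ×ˢ Iic t)) :
    ∫ p, stepDiff p.1 s * stepDiff p.2 t ∂J ≤ ∫ p, stepDiff p.1 s * stepDiff p.2 t ∂M := by
  have huniv : J.real univ = M.real univ := by
    rw [← preimage_univ (f := Prod.fst), ← map_measureReal_apply measurable_fst MeasurableSet.univ,
      h0, map_measureReal_apply measurable_fst MeasurableSet.univ]
  simp only [stepDiff]
  rw [integral_indicator_sub_mul_indicator_sub J measurableSet_Iic measurableSet_Iic,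
    integral_indicator_sub_mul_indicator_sub M measurableSet_Iic measurableSet_Iic, h0, h1, huniv]
  have := ENNReal.toReal_mono (measure_ne_top M _) hle
  simp only [measureReal_def]
  linarith

lemma integrable_stepDiff_mul_stepDiff {K : Measure (ℝ × ℝ)} [SFinite K]
    (hK : Integrable (fun p => p.1 * p.2) K) :
    Integrable (fun q : (ℝ × ℝ) × (ℝ × ℝ) => stepDiff q.1.1 q.2.1 * stepDiff q.1.2 q.2.2)
      (K.prod volume) := by
  have hmeas : Measurable fun q : (ℝ × ℝ) × (ℝ × ℝ) =>
      stepDiff q.1.1 q.2.1 * stepDiff q.1.2 q.2.2 :=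
    (measurable_stepDiff.comp (measurable_fst.fst.prodMk measurable_snd.fst)).mul
      (measurable_stepDiff.comp (measurable_fst.snd.prodMk measurable_snd.snd))
  rw [Measure.volume_eq_prod]
  refine (integrable_prod_iff hmeas.aestronglyMeasurable).2
    ⟨ae_of_all _ fun p => (integrable_stepDiff p.1).mul_prod (integrable_stepDiff p.2), ?_⟩
  refine hK.norm.congr (ae_of_all _ fun p => ?_)
  simp only [norm_mul, Real.norm_eq_abs]
  rw [integral_prod_mul (fun s => |stepDiff p.1 s|) (fun t => |stepDiff p.2 t|),
    integral_abs_stepDiff, integral_abs_stepDiff]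

lemma integral_fst_mul_snd_eq_integral_stepDiff {K : Measure (ℝ × ℝ)} [SFinite K]
    (hK : Integrable (fun p => p.1 * p.2) K) :
    ∫ p, p.1 * p.2 ∂K = ∫ st : ℝ × ℝ, ∫ p, stepDiff p.1 st.1 * stepDiff p.2 st.2 ∂K := by
  have hmul : ∀ x y : ℝ, x * y = ∫ st : ℝ × ℝ, stepDiff x st.1 * stepDiff y st.2 := by
    intro x y
    rw [Measure.volume_eq_prod, integral_prod_mul (fun s => stepDiff x s) (fun t => stepDiff y t),
      integral_stepDiff, integral_stepDiff, neg_mul_neg]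
  calc ∫ p, p.1 * p.2 ∂K = ∫ p, (∫ st : ℝ × ℝ, stepDiff p.1 st.1 * stepDiff p.2 st.2) ∂K :=
        integral_congr_ae (ae_of_all _ fun p => hmul p.1 p.2)
    _ = _ := integral_integral_swap (integrable_stepDiff_mul_stepDiff hK)

lemma integral_fst_mul_snd_le {J M : Measure (ℝ × ℝ)} [IsFiniteMeasure J] [IsFiniteMeasure M]
    (hJ : Integrable (fun p => p.1 * p.2) J) (hM : Integrable (fun p => p.1 * p.2) M)
    (h0 : J.map Prod.fst = M.map Prod.fst) (h1 : J.map Prod.snd = M.map Prod.snd)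
    (hle : ∀ s t, J (Iic s ×ˢ Iic t) ≤ M (Iic s ×ˢ Iic t)) :
    ∫ p, p.1 * p.2 ∂J ≤ ∫ p, p.1 * p.2 ∂M := by
  rw [integral_fst_mul_snd_eq_integral_stepDiff hJ, integral_fst_mul_snd_eq_integral_stepDiff hM]
  exact integral_mono (integrable_stepDiff_mul_stepDiff hJ).integral_prod_right
    (integrable_stepDiff_mul_stepDiff hM).integral_prod_right
    fun st => integral_stepDiff_mul_stepDiff_le h0 h1 (hle st.1 st.2)

end CrossMoment

section Moments

variable {K : Measure (ℝ × ℝ)}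

lemma integrable_fst_sq (h : Integrable (fun y : ℝ => y ^ 2) (K.map Prod.fst)) :
    Integrable (fun p : ℝ × ℝ => p.1 ^ 2) K :=
  (integrable_map_measure (by fun_prop) measurable_fst.aemeasurable).1 h

lemma integrable_snd_sq (h : Integrable (fun y : ℝ => y ^ 2) (K.map Prod.snd)) :
    Integrable (fun p : ℝ × ℝ => p.2 ^ 2) K :=
  (integrable_map_measure (by fun_prop) measurable_snd.aemeasurable).1 h

variable {μ ν : Measure ℝ}

lemma integrable_fst_mul_snd (h0 : K.map Prod.fst = μ) (h1 : K.map Prod.snd = ν)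
    (hμ : Integrable (fun y : ℝ => y ^ 2) μ) (hν : Integrable (fun y : ℝ => y ^ 2) ν) :
    Integrable (fun p : ℝ × ℝ => p.1 * p.2) K := by
  subst h0 h1
  refine ((integrable_fst_sq hμ).add (integrable_snd_sq hν)).mono' (by fun_prop)
    (ae_of_all _ fun p => ?_)
  simp only [Real.norm_eq_abs, abs_mul, Pi.add_apply]
  nlinarith [sq_nonneg (|p.1| - |p.2|), sq_abs p.1, sq_abs p.2]

lemma integral_sub_sq (h0 : K.map Prod.fst = μ) (h1 : K.map Prod.snd = ν)
    (hμ : Integrable (fun y : ℝ => y ^ 2) μ) (hν : Integrable (fun y : ℝ => y ^ 2) ν) :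
    ∫ p, (p.2 - p.1) ^ 2 ∂K = ∫ y, y ^ 2 ∂μ + ∫ y, y ^ 2 ∂ν - 2 * ∫ p, p.1 * p.2 ∂K := by
  have hxy := integrable_fst_mul_snd h0 h1 hμ hν
  subst h0 h1
  have hx := integrable_fst_sq hμ
  have hy := integrable_snd_sq hν
  have hexpand : ∀ p : ℝ × ℝ, (p.2 - p.1) ^ 2 = p.1 ^ 2 + p.2 ^ 2 - 2 * (p.1 * p.2) :=
    fun p => by ring
  simp only [hexpand]
  rw [integral_sub, integral_add hx hy, integral_const_mul,
    integral_map measurable_fst.aemeasurable (by fun_prop),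
    integral_map measurable_snd.aemeasurable (by fun_prop)]
  · exact hx.add hy
  · exact hxy.const_mul 2

end Moments

/-- The comonotone (quantile) coupling minimizes the quadratic treatment effect, and the
minimum equals the squared 2-Wasserstein distance. -/
theorem comonotone_minimizes_quadratic_effect
    (P0 P1 : Measure ℝ) [IsProbabilityMeasure P0] [IsProbabilityMeasure P1]
    (hm0 : Integrable (fun y : ℝ => y ^ 2) P0) (hm1 : Integrable (fun y : ℝ => y ^ 2) P1)
    (J : Measure (ℝ × ℝ)) [IsProbabilityMeasure J]
    (h0 : J.map Prod.fst = P0) (h1 : J.map Prod.snd = P1) :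
    ((∫ u in Ioo (0:ℝ) 1, (quantile P1 u - quantile P0 u) ^ 2)
        ≤ ∫ p : ℝ × ℝ, (p.2 - p.1) ^ 2 ∂J) ∧
    (J = (volume.restrict (Ioo (0:ℝ) 1)).map (fun u => (quantile P0 u, quantile P1 u)) →
      (∫ p : ℝ × ℝ, (p.2 - p.1) ^ 2 ∂J)
        = ∫ u in Ioo (0:ℝ) 1, (quantile P1 u - quantile P0 u) ^ 2) := by
  have hM0 := map_fst_comonotoneCoupling P0 P1
  have hM1 := map_snd_comonotoneCoupling P0 P1
  have hcost : ∫ p, (p.2 - p.1) ^ 2 ∂comonotoneCoupling P0 P1 =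
      ∫ u in Ioo 0 1, (quantile P1 u - quantile P0 u) ^ 2 :=
    integral_comonotoneCoupling P0 P1 (fun p => (p.2 - p.1) ^ 2) (by fun_prop)
  refine ⟨?_, fun hJ => hJ ▸ hcost⟩
  have hcov : ∫ p, p.1 * p.2 ∂J ≤ ∫ p, p.1 * p.2 ∂comonotoneCoupling P0 P1 :=
    integral_fst_mul_snd_le (integrable_fst_mul_snd h0 h1 hm0 hm1)
      (integrable_fst_mul_snd hM0 hM1 hm0 hm1) (h0.trans hM0.symm) (h1.trans hM1.symm)
      fun s t => (measure_prod_le_min_map J _ _).trans_eq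
        (by rw [h0, h1, comonotoneCoupling_Iic_prod_Iic])
  rw [← hcost, integral_sub_sq h0 h1 hm0 hm1, integral_sub_sq hM0 hM1 hm0 hm1]
  linarith
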